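/- Let A ∈ ℝ^{𝒩×𝒩} be symmetric, N : EuclideanSpace ℝ (Fin 𝒩) → ℝ continuously differentiable with gradient f, E(u) = (1/2)·⟪u, A·u⟫ + N(u), Ψ ∈ ℝ^{𝒩×N}, A_r = Ψᵀ A Ψ, and let ĝ : EuclideanSpace ℝ (Fin 𝒩) → EuclideanSpace ℝ (Fin 𝒩) be continuous. Let Δt > 0 and suppose u_r⁺, u_r⁰ ∈ EuclideanSpace ℝ (Fin N) satisfy the DEIM-reduced AVF step (u_r⁺ − u_r⁰) + (Δt/2)·A_r·(u_r⁺ + u_r⁰) + Δt·∫_0^1 Ψᵀ ĝ(Ψ·z(τ)) dτ = 0, where z(τ) = τ·u_r⁺ + (1−τ)·u_r⁰. Then E(Ψ·u_r⁺) − E(Ψ·u_r⁰) = −(1/Δt)·‖u_r⁺ − u_r⁰‖² + ∫_0^1 ⟪Ψ·(u_r⁺ − u_r⁰), f(Ψ·z(τ)) − ĝ(Ψ·z(τ))⟫ dτ. -/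

import Mathlib

open MeasureTheory Matrix
open scoped InnerProductSpace

/-!
Pair the reduced step with `δ = u_r⁺ - u_r⁰`. Since `A_r = Ψᵀ A Ψ`, the quadratic term becomes
`(Δt/2) ⟪Ψδ, A Ψ(u_r⁺ + u_r⁰)⟫`, which by symmetry of `A` is `Δt` times the change of the
quadratic energy, and the nonlinear term becomes `Δt ∫ ⟪Ψδ, ĝ(Ψ z(τ))⟫ dτ`. The fundamental
theorem of calculus along the segment `Ψ z(τ)` writes the change of `N` as
`∫ ⟪Ψδ, f(Ψ z(τ))⟫ dτ`, so the energy change is `-‖δ‖²/Δt` plus the difference of the two integrals.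
-/

section

variable {E : Type*} [NormedAddCommGroup E] [InnerProductSpace ℝ E]

theorem LinearMap.IsSymmetric.inner_map_self_sub_inner_map_self {T : E →ₗ[ℝ] E}
    (hT : T.IsSymmetric) (u v : E) :
    ⟪u, T u⟫_ℝ - ⟪v, T v⟫_ℝ = ⟪u - v, T (u + v)⟫_ℝ := by
  rw [map_add, inner_sub_left, inner_add_right, inner_add_right, ← hT v u,
    real_inner_comm u (T v)]
  ring

theorem inner_intervalIntegral [CompleteSpace E] (c : E) {h : ℝ → E} {a b : ℝ}
    (hh : IntervalIntegrable h volume a b) :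
    ⟪c, ∫ τ in a..b, h τ⟫_ℝ = ∫ τ in a..b, ⟪c, h τ⟫_ℝ :=
  ((innerSL ℝ c).intervalIntegral_comp_comm hh).symm

theorem sub_eq_integral_inner_gradient [CompleteSpace E] {N : E → ℝ} {f : E → E}
    (hN : ∀ x, HasGradientAt N (f x) x) (hf : Continuous f) (u v : E) :
    N u - N v = ∫ τ in (0:ℝ)..1, ⟪u - v, f (τ • u + (1 - τ) • v)⟫_ℝ := by
  have hpath : ∀ τ : ℝ, HasDerivAt (fun t : ℝ => t • u + (1 - t) • v) (u - v) τ := by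
    intro τ
    simpa [← sub_eq_add_neg] using ((hasDerivAt_id τ).smul_const u).fun_add
      (((hasDerivAt_const τ (1:ℝ)).sub (hasDerivAt_id τ)).smul_const v)
  have hderiv : ∀ τ ∈ Set.uIcc (0:ℝ) 1, HasDerivAt (fun t : ℝ => N (t • u + (1 - t) • v))
      ⟪u - v, f (τ • u + (1 - τ) • v)⟫_ℝ τ := by
    intro τ _
    simpa [Function.comp_def, real_inner_comm] using (hN _).hasFDerivAt.comp_hasDerivAt τ (hpath τ)
  have hint : IntervalIntegrable (fun τ : ℝ => ⟪u - v, f (τ • u + (1 - τ) • v)⟫_ℝ) volume 0 1 :=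
    (continuous_const.inner (hf.comp (by fun_prop))).intervalIntegrable 0 1
  rw [intervalIntegral.integral_eq_sub_of_hasDerivAt hderiv hint]
  simp

end

namespace Matrix

variable {m n : Type*} [Fintype m] [Fintype n] [DecidableEq m] [DecidableEq n]

theorem inner_toEuclideanLin_transpose (M : Matrix m n ℝ) (v : EuclideanSpace ℝ n)
    (w : EuclideanSpace ℝ m) :
    ⟪v, Mᵀ.toEuclideanLin w⟫_ℝ = ⟪M.toEuclideanLin v, w⟫_ℝ := by
  rw [← conjTranspose_eq_transpose_of_trivial, toEuclideanLin_conjTranspose_eq_adjoint,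
    LinearMap.adjoint_inner_right]

theorem inner_toEuclideanLin_transpose_mul_mul (M : Matrix m n ℝ) (A : Matrix m m ℝ)
    (v w : EuclideanSpace ℝ n) :
    ⟪v, (Mᵀ * A * M).toEuclideanLin w⟫_ℝ
      = ⟪M.toEuclideanLin v, A.toEuclideanLin (M.toEuclideanLin w)⟫_ℝ := by
  simp only [toLpLin_mul_same, LinearMap.comp_apply, inner_toEuclideanLin_transpose]

theorem inner_intervalIntegral_toEuclideanLin_transpose (M : Matrix m n ℝ)
    (v : EuclideanSpace ℝ n) {h : ℝ → EuclideanSpace ℝ m} {a b : ℝ}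
    (hh : IntervalIntegrable h volume a b) :
    ⟪v, ∫ τ in a..b, Mᵀ.toEuclideanLin (h τ)⟫_ℝ = ∫ τ in a..b, ⟪M.toEuclideanLin v, h τ⟫_ℝ := by
  rw [← inner_intervalIntegral _ hh, ← inner_toEuclideanLin_transpose]
  congr 1
  exact (LinearMap.toContinuousLinearMap Mᵀ.toEuclideanLin).intervalIntegral_comp_comm hh

end Matrix

/-- Energy change of one AVF step of the DEIM reduced order model,
where the exact nonlinear vector `f = ∇N` is replaced in the scheme by the DEIM
approximation `ĝ`: for the step
`(u_r⁺ - u_r⁰) + (Δt/2) A_r (u_r⁺ + u_r⁰) + Δt ∫_0^1 Ψᵀ ĝ(Ψ z(τ)) dτ = 0`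
with `z(τ) = τ u_r⁺ + (1-τ) u_r⁰`, one has
`E (Ψ u_r⁺) - E (Ψ u_r⁰) = -(1/Δt) ‖u_r⁺ - u_r⁰‖²
  + ∫_0^1 ⟪Ψ (u_r⁺ - u_r⁰), f(Ψ z(τ)) - ĝ(Ψ z(τ))⟫ dτ`. -/
theorem deim_rom_avf_energy_identity {𝒩 Nr : ℕ}
    (A : Matrix (Fin 𝒩) (Fin 𝒩) ℝ) (hA : A.IsSymm)
    (N : EuclideanSpace ℝ (Fin 𝒩) → ℝ)
    (f : EuclideanSpace ℝ (Fin 𝒩) → EuclideanSpace ℝ (Fin 𝒩))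
    (hN : ∀ u, HasGradientAt N (f u) u) (hf : Continuous f)
    (E : EuclideanSpace ℝ (Fin 𝒩) → ℝ)
    (hE : ∀ u : EuclideanSpace ℝ (Fin 𝒩),
      E u = (1 / 2) * ⟪u, Matrix.toEuclideanLin A u⟫_ℝ + N u)
    (Ψ : Matrix (Fin 𝒩) (Fin Nr) ℝ) (Ar : Matrix (Fin Nr) (Fin Nr) ℝ)
    (hAr : Ar = Ψᵀ * A * Ψ)
    (g : EuclideanSpace ℝ (Fin 𝒩) → EuclideanSpace ℝ (Fin 𝒩)) (hg : Continuous g)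
    (Δt : ℝ) (hΔt : 0 < Δt) (urp ur0 : EuclideanSpace ℝ (Fin Nr))
    (z : ℝ → EuclideanSpace ℝ (Fin Nr)) (hz : ∀ τ, z τ = τ • urp + (1 - τ) • ur0)
    (hstep : (urp - ur0) + (Δt / 2) • Matrix.toEuclideanLin Ar (urp + ur0)
        + Δt • (∫ τ in (0:ℝ)..1,
            Matrix.toEuclideanLin Ψᵀ (g (Matrix.toEuclideanLin Ψ (z τ)))) = 0) :
    E (Matrix.toEuclideanLin Ψ urp) - E (Matrix.toEuclideanLin Ψ ur0)
        = -(1 / Δt) * ‖urp - ur0‖ ^ 2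
          + ∫ τ in (0:ℝ)..1,
              ⟪Matrix.toEuclideanLin Ψ (urp - ur0),
                f (Matrix.toEuclideanLin Ψ (z τ)) - g (Matrix.toEuclideanLin Ψ (z τ))⟫_ℝ := by
  set Ψl := Matrix.toEuclideanLin Ψ
  have hΨz : ∀ τ, Ψl (z τ) = τ • Ψl urp + (1 - τ) • Ψl ur0 := by simp [hz]
  have hfz : Continuous fun τ => f (Ψl (z τ)) := by simp_rw [hΨz]; exact hf.comp (by fun_prop)
  have hgz : Continuous fun τ => g (Ψl (z τ)) := by simp_rw [hΨz]; exact hg.comp (by fun_prop)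
  have hpair : ‖urp - ur0‖ ^ 2
      + Δt / 2 * ⟪Ψl urp - Ψl ur0, A.toEuclideanLin (Ψl urp + Ψl ur0)⟫_ℝ
      + Δt * ∫ τ in (0:ℝ)..1, ⟪Ψl urp - Ψl ur0, g (Ψl (z τ))⟫_ℝ = 0 := by
    have h := congrArg (⟪urp - ur0, ·⟫_ℝ) hstep
    simpa only [inner_add_right, real_inner_smul_right, inner_zero_right,
      real_inner_self_eq_norm_sq, hAr, inner_toEuclideanLin_transpose_mul_mul, map_sub, map_add,
      inner_intervalIntegral_toEuclideanLin_transpose _ _ (hgz.intervalIntegrable 0 1)] using h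
  have hdiss : -(1 / Δt) * ‖urp - ur0‖ ^ 2
      = 1 / 2 * ⟪Ψl urp - Ψl ur0, A.toEuclideanLin (Ψl urp + Ψl ur0)⟫_ℝ
        + ∫ τ in (0:ℝ)..1, ⟪Ψl urp - Ψl ur0, g (Ψl (z τ))⟫_ℝ := by
    field_simp
    linear_combination -2 * hpair
  have hquad := (isSymmetric_toEuclideanLin_iff.mpr (isHermitian_iff_isSymm.mpr hA))
    |>.inner_map_self_sub_inner_map_self (Ψl urp) (Ψl ur0)
  have hpot := sub_eq_integral_inner_gradient hN hf (Ψl urp) (Ψl ur0)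
  simp only [← hΨz] at hpot
  rw [hE, hE, hdiss, map_sub]
  simp_rw [inner_sub_right]
  rw [intervalIntegral.integral_sub ((continuous_const.inner hfz).intervalIntegrable 0 1)
    ((continuous_const.inner hgz).intervalIntegrable 0 1)]
  linear_combination (1 / 2) * hquad + hpot
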